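/- arXiv:math/0111003 — 2 statements merged into one kernel-verified Lean document; each statement's English description precedes it below -/
import Mathlib

section
/- For n+1 points p₀, p₁, ..., pₙ in the Minkowski n-space, the squared volume of the simplex [p₀, ..., pₙ] (where volume is the Euclidean volume, i.e., |det of the matrix of edge vectors|/n!) satisfies the modified Cayley–Menger formula: vol²[p₀,...,pₙ] = ((-1)^n / (2^n (n!)²)) · det(M), where M is the (n+2)×(n+2) matrix with M₀₀ = 0, M₀ⱼ = Mⱼ₀ = 1 for j ≥ 1, and M_{j+1,k+1} = d²_{jk} for j,k = 0,...,n, where d²_{jk} = (pⱼ - pₖ, pⱼ - pₖ) is the Minkowski squared distance. -/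
/-- Minkowski scalar product on `ℝ^n`: the last coordinate enters with a minus sign. -/
def minkProd (n : ℕ) (x y : Fin n → ℝ) : ℝ :=
  ∑ i : Fin n, (if (i : ℕ) = n - 1 then -1 else 1) * x i * y i

/-- The Euclidean volume of the simplex `[p₀, …, pₙ]`. -/
noncomputable def simplexVol (n : ℕ) (p : Fin (n + 1) → Fin n → ℝ) : ℝ :=
  (1 / n.factorial) * |(Matrix.of fun i j : Fin n => p i.succ j - p 0 j).det|

/-- The bordered Cayley–Menger matrix built from the Minkowski squared distances. -/
def cayleyMenger (n : ℕ) (p : Fin (n + 1) → Fin n → ℝ) :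
    Matrix (Fin (n + 2)) (Fin (n + 2)) ℝ :=
  Matrix.of fun i j =>
    if (i : ℕ) = 0 then (if (j : ℕ) = 0 then 0 else 1)
    else if (j : ℕ) = 0 then 1
    else minkProd n (p ⟨(i : ℕ) - 1, by have := i.isLt; omega⟩ -
                     p ⟨(j : ℕ) - 1, by have := j.isLt; omega⟩)
                   (p ⟨(i : ℕ) - 1, by have := i.isLt; omega⟩ -
                     p ⟨(j : ℕ) - 1, by have := j.isLt; omega⟩)

/-!
Write `Q x = xᵀ G x` for a symmetric `G`, and `vᵢ = pᵢ - p₀` for the edge vectors, the rows of the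
edge matrix `V`. Since `Q (vᵢ - vⱼ) = Q vᵢ + Q vⱼ - 2 vᵢᵀ G vⱼ`, the Cayley–Menger matrix of `Q`,
with the border index and `p₀` moved into a leading `2 × 2` block, is the product of a block lower
triangular matrix of determinant `-det V` and a block upper triangular one of determinant
`(-2)ⁿ det G det V`. Hence its determinant is `-(-2)ⁿ det G (det V)²`, while `vol² = (det V / n!)²`;
the Minkowski metric has `det G = -1`.
-/

open Matrix

section QuadraticForm

variable {R : Type*} [CommRing R] {n : ℕ}

lemma sub_dotProduct_mulVec_sub {G : Matrix (Fin n) (Fin n) R} (hG : Gᵀ = G) (x y : Fin n → R) :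
    (x - y) ⬝ᵥ G *ᵥ (x - y) = x ⬝ᵥ G *ᵥ x + y ⬝ᵥ G *ᵥ y - 2 * (x ⬝ᵥ G *ᵥ y) := by
  have hsymm : y ⬝ᵥ G *ᵥ x = x ⬝ᵥ G *ᵥ y := by
    rw [dotProduct_mulVec, dotProduct_comm, ← mulVec_transpose, hG]
  rw [sub_dotProduct, mulVec_sub, dotProduct_sub, dotProduct_sub, hsymm]
  ring

def cayleyMengerMatrix (G : Matrix (Fin n) (Fin n) R) (p : Fin (n + 1) → Fin n → R) :
    Matrix (Fin (n + 2)) (Fin (n + 2)) R :=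
  of (Fin.cases (Fin.cases 0 fun _ => 1) fun i =>
    Fin.cases 1 fun j => (p i - p j) ⬝ᵥ G *ᵥ (p i - p j))

def edgeMatrix (p : Fin (n + 1) → Fin n → R) : Matrix (Fin n) (Fin n) R :=
  of fun i j => p i.succ j - p 0 j

def finTwoSumEquiv (n : ℕ) : Fin 2 ⊕ Fin n ≃ Fin (n + 2) :=
  finSumFinEquiv.trans (finCongr (Nat.add_comm 2 n))

lemma finTwoSumEquiv_inl_zero : finTwoSumEquiv n (.inl 0) = 0 := rfl

lemma finTwoSumEquiv_inl_one : finTwoSumEquiv n (.inl 1) = Fin.succ 0 := rfl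

lemma finTwoSumEquiv_inr (k : Fin n) : finTwoSumEquiv n (.inr k) = k.succ.succ := by
  ext; simp [finTwoSumEquiv]

lemma cayleyMengerMatrix_submatrix_finTwoSumEquiv {G : Matrix (Fin n) (Fin n) R} (hG : Gᵀ = G)
    (p : Fin (n + 1) → Fin n → R) :
    (cayleyMengerMatrix G p).submatrix (finTwoSumEquiv n) (finTwoSumEquiv n) =
      fromBlocks !![0, 1; 1, 0] 0
          (of ![1, fun k => edgeMatrix p k ⬝ᵥ G *ᵥ edgeMatrix p k])ᵀ (edgeMatrix p) *
        fromBlocks 1 (of ![fun k => edgeMatrix p k ⬝ᵥ G *ᵥ edgeMatrix p k, 1]) 0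
          ((-2 : R) • (G * (edgeMatrix p)ᵀ)) := by
  have hedge (k : Fin n) : p k.succ - p 0 = edgeMatrix p k := rfl
  have hgram (j k : Fin n) :
      (edgeMatrix p * (G * (edgeMatrix p)ᵀ)) j k = edgeMatrix p j ⬝ᵥ G *ᵥ edgeMatrix p k := rfl
  rw [fromBlocks_multiply]
  ext (t | j) (u | k)
  all_goals try fin_cases t
  all_goals try fin_cases u
  all_goals
    simp only [submatrix_apply, finTwoSumEquiv_inl_zero, Fin.zero_eta, Fin.mk_one,
      finTwoSumEquiv_inl_one, finTwoSumEquiv_inr, cayleyMengerMatrix, of_apply, Fin.cases_zero,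
      Fin.cases_succ, fromBlocks_apply₁₁, fromBlocks_apply₁₂, fromBlocks_apply₂₁,
      fromBlocks_apply₂₂]
  any_goals (simp; done)
  · rw [← neg_sub, hedge, neg_dotProduct, mulVec_neg, dotProduct_neg, neg_neg]
    simp
  · rw [hedge]
    simp
  · rw [← sub_sub_sub_cancel_right (p j.succ) (p k.succ) (p 0), hedge, hedge,
      sub_dotProduct_mulVec_sub hG, Matrix.add_apply, Matrix.mul_smul, Matrix.smul_apply, hgram]
    simp [mul_apply, Fin.sum_univ_two]
    ring

theorem det_cayleyMengerMatrix {G : Matrix (Fin n) (Fin n) R} (hG : Gᵀ = G)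
    (p : Fin (n + 1) → Fin n → R) :
    (cayleyMengerMatrix G p).det = -(-2) ^ n * G.det * (edgeMatrix p).det ^ 2 := by
  rw [← det_submatrix_equiv_self (finTwoSumEquiv n),
    cayleyMengerMatrix_submatrix_finTwoSumEquiv hG, det_mul, det_fromBlocks_zero₁₂,
    det_fromBlocks_zero₂₁, det_fin_two_of, det_one, det_smul,
    det_mul, det_transpose, Fintype.card_fin]
  ring

end QuadraticForm

def minkowskiMetric (n : ℕ) : Matrix (Fin n) (Fin n) ℝ :=
  diagonal fun i => if (i : ℕ) = n - 1 then -1 else 1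

lemma minkProd_eq_dotProduct_mulVec (n : ℕ) (x y : Fin n → ℝ) :
    minkProd n x y = x ⬝ᵥ minkowskiMetric n *ᵥ y := by
  simp only [minkProd, minkowskiMetric, mulVec_diagonal, dotProduct]
  exact Finset.sum_congr rfl fun i _ => by ring

lemma det_minkowskiMetric {n : ℕ} (hn : 1 ≤ n) : (minkowskiMetric n).det = -1 := by
  rw [minkowskiMetric, det_diagonal, Finset.prod_eq_single ⟨n - 1, by omega⟩]
  · simp
  · intro i _ hi
    rw [if_neg fun h => hi (Fin.ext h)]
  · simp

lemma simplexVol_sq (n : ℕ) (p : Fin (n + 1) → Fin n → ℝ) :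
    simplexVol n p ^ 2 = (edgeMatrix p).det ^ 2 / (n.factorial : ℝ) ^ 2 := by
  rw [simplexVol, mul_pow, sq_abs, _root_.one_div_pow, one_div_mul_eq_div]
  rfl

lemma cayleyMenger_eq_cayleyMengerMatrix (n : ℕ) (p : Fin (n + 1) → Fin n → ℝ) :
    cayleyMenger n p = cayleyMengerMatrix (minkowskiMetric n) p := by
  ext i j
  cases i using Fin.cases <;> cases j using Fin.cases <;>
    simp [cayleyMenger, cayleyMengerMatrix, minkProd_eq_dotProduct_mulVec]

/-- Modified Cayley–Menger formula in Minkowski `n`-space. -/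
theorem minkowski_cayley_menger (n : ℕ) (hn : 1 ≤ n) (p : Fin (n + 1) → Fin n → ℝ) :
    (simplexVol n p) ^ 2 =
      ((-1 : ℝ) ^ n / (2 ^ n * ((n.factorial : ℝ)) ^ 2)) * (cayleyMenger n p).det := by
  have hsymm : (minkowskiMetric n)ᵀ = minkowskiMetric n := diagonal_transpose _
  have hsign : (-1 : ℝ) ^ n * (-2) ^ n = 2 ^ n := by rw [← mul_pow]; norm_num
  rw [simplexVol_sq, cayleyMenger_eq_cayleyMengerMatrix, det_cayleyMengerMatrix hsymm,
    det_minkowskiMetric hn]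
  field_simp
  rw [← hsign]
  ring
end

section
/- For the special case n = 2: given three points p₀, p₁, p₂ in the Minkowski plane, with d²_{jk} the Minkowski squared distances, the Euclidean area A of the triangle satisfies A² = ((-1)²/(2²·(2!)²))·det [[0,1,1,1],[1,0,d²₀₁,d²₀₂],[1,d²₁₀,0,d²₁₂],[1,d²₂₀,d²₂₁,0]] = (1/16)·det [[0,1,1,1],[1,0,d²₀₁,d²₀₂],[1,d²₁₀,0,d²₁₂],[1,d²₂₀,d²₂₁,0]]. -/
/-- Minkowski scalar product on the plane `ℝ²`. -/
def mink2 (x y : ℝ × ℝ) : ℝ := x.1 * y.1 - x.2 * y.2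

/-- Minkowski squared distance between two points of the Minkowski plane. -/
def dsq (p q : ℝ × ℝ) : ℝ := mink2 (p - q) (p - q)

lemma det_fin_four' (M : Matrix (Fin 4) (Fin 4) ℝ) :
    M.det =
      M 0 0 * (M 1 1 * (M 2 2 * M 3 3 - M 2 3 * M 3 2) - M 1 2 * (M 2 1 * M 3 3 - M 2 3 * M 3 1)
        + M 1 3 * (M 2 1 * M 3 2 - M 2 2 * M 3 1))
      - M 0 1 * (M 1 0 * (M 2 2 * M 3 3 - M 2 3 * M 3 2) - M 1 2 * (M 2 0 * M 3 3 - M 2 3 * M 3 0)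
        + M 1 3 * (M 2 0 * M 3 2 - M 2 2 * M 3 0))
      + M 0 2 * (M 1 0 * (M 2 1 * M 3 3 - M 2 3 * M 3 1) - M 1 1 * (M 2 0 * M 3 3 - M 2 3 * M 3 0)
        + M 1 3 * (M 2 0 * M 3 1 - M 2 1 * M 3 0))
      - M 0 3 * (M 1 0 * (M 2 1 * M 3 2 - M 2 2 * M 3 1) - M 1 1 * (M 2 0 * M 3 2 - M 2 2 * M 3 0)
        + M 1 2 * (M 2 0 * M 3 1 - M 2 1 * M 3 0)) := by
  have h1 : (Fin.succ 2 : Fin 4) = 3 := rfl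
  have h2 : Fin.succAbove (2 : Fin 4) 2 = 3 := rfl
  have h3 : Fin.succAbove (1 : Fin 4) 2 = 3 := rfl
  have h4 : (Fin.castSucc 2 : Fin 4) = 2 := rfl
  simp only [Matrix.det_succ_row_zero, Fin.sum_univ_succ, Fin.sum_univ_zero,
    Matrix.det_fin_zero, Matrix.submatrix_apply, Fin.succAbove_zero, h1, h2, h3, h4]
  norm_num [Fin.succAbove, Fin.lt_def]
  simp only [h1, h4]
  ring

set_option maxHeartbeats 1000000 in
/-- The Cayley–Menger formula for a triangle in the Minkowski plane:
the squared Euclidean area is `(1/16)` times the bordered determinant of the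
Minkowski squared distances. -/
theorem minkowski_cayley_menger_triangle (p₀ p₁ p₂ : ℝ × ℝ)
    (A : ℝ) (hA : A = (1 / 2) * |(p₁.1 - p₀.1) * (p₂.2 - p₀.2) - (p₁.2 - p₀.2) * (p₂.1 - p₀.1)|) :
    A ^ 2 = (1 / 16) *
      (!![0, 1, 1, 1;
          1, 0, dsq p₀ p₁, dsq p₀ p₂;
          1, dsq p₁ p₀, 0, dsq p₁ p₂;
          1, dsq p₂ p₀, dsq p₂ p₁, 0] : Matrix (Fin 4) (Fin 4) ℝ).det := by
  rw [hA, mul_pow, sq_abs, det_fin_four']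
  simp only [Matrix.cons_val_zero, Matrix.cons_val_one, Matrix.head_cons,
    Matrix.cons_val_two, Matrix.cons_val_three, Matrix.tail_cons, Matrix.of_apply,
    dsq, mink2, Prod.fst_sub, Prod.snd_sub]
  ring
end
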